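/- arXiv:1810.03252 — 2 statements merged into one kernel-verified Lean document; each statement's English description precedes it below -/
import Mathlib

section
/- For every i = 0, …, n one has the identity S_{2i} − (α_{2i}/φ_{2i}) · S_{2i+1} = 1 − q/β₀. -/
open Finset

/-! Both sums are built from the same partial products `Pⱼ = ∏_{k<j} aₖ bₖ` with
`aₖ = α_{2i+2k}/φ_{2i+2k}` and `bₖ = φ_{2i+2k+1}`: the `j`-th term of `S_{2i}` is `Pⱼ (1 + aⱼ)`, and
`a₀` times the `j`-th term of `S_{2i+1}` is `Pⱼ aⱼ (1 + bⱼ)`. Their difference is `Pⱼ - Pⱼ₊₁`, so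
the left-hand side telescopes to `1 - P_{n+1}`. Since `2(n+1) = 0` in `ZMod (2n+2)`, `P_{n+1}` is a
product over a full period and does not depend on `i`; pairing its factors with those of `β₀`
gives `P_{n+1} β₀ = q`. -/

/-- `S_{2i}`, evaluated at the even index `x = 2i` of `ZMod (2n+2)`. -/
noncomputable def Sev (n : ℕ) {K : Type*} [Field K] (α φ : ZMod (2*n+2) → K)
    (x : ZMod (2*n+2)) : K :=
  ∑ j ∈ range (n+1),
    (∏ k ∈ range j, (α (x + 2*k) / φ (x + 2*k)) * φ (x + 2*k + 1))
      * (1 + α (x + 2*j) / φ (x + 2*j))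

/-- `S_{2i+1}`, evaluated at the odd index `x = 2i+1` of `ZMod (2n+2)`. -/
noncomputable def Sod (n : ℕ) {K : Type*} [Field K] (α φ : ZMod (2*n+2) → K)
    (x : ZMod (2*n+2)) : K :=
  ∑ j ∈ range (n+1),
    (∏ k ∈ range j, φ (x + 2*k) * (α (x + 2*k + 1) / φ (x + 2*k + 1)))
      * (1 + φ (x + 2*j))

section CommMonoid

variable {M : Type*} [CommMonoid M]

theorem prod_range_two_mul (f : ℕ → M) (m : ℕ) :
    ∏ i ∈ range (2 * m), f i = ∏ k ∈ range m, f (2 * k) * f (2 * k + 1) := by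
  induction m with
  | zero => simp
  | succ m ih =>
    rw [Nat.mul_succ, prod_range_succ, prod_range_succ, ih, prod_range_succ, mul_assoc]

theorem mul_prod_range_interleave (a b : ℕ → M) (j : ℕ) :
    a 0 * ∏ k ∈ range j, b k * a (k + 1) = (∏ k ∈ range j, a k * b k) * a j := by
  induction j with
  | zero => simp
  | succ j ih =>
    rw [prod_range_succ, ← mul_assoc, ih, prod_range_succ]
    ac_rfl

theorem prod_range_add_of_periodic {f : ℕ → M} {m : ℕ} (hf : Function.Periodic f m) (i : ℕ) :
    ∏ k ∈ range m, f (i + k) = ∏ k ∈ range m, f k := by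
  induction i with
  | zero => simp
  | succ i ih =>
    rw [← ih]
    cases m with
    | zero => simp
    | succ m =>
      rw [prod_range_succ, prod_range_succ' (fun k => f (i + k)), add_zero,
        show i + 1 + m = i + (m + 1) by omega, hf]
      simp only [add_assoc, add_comm 1]

theorem ZMod.prod_range_add_two_mul (n : ℕ) (g : ZMod (2 * n + 2) → M) (i : ℕ) :
    ∏ k ∈ range (n + 1), g (2 * i + 2 * k) = ∏ k ∈ range (n + 1), g (2 * k) := by
  have hper : Function.Periodic (fun k : ℕ => g (2 * k)) (n + 1) := fun k => by
    have h := ZMod.natCast_self (2 * n + 2)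
    push_cast at h ⊢
    rw [mul_add, mul_add_one, h, add_zero]
  simpa only [Nat.cast_add, mul_add] using prod_range_add_of_periodic hper i

end CommMonoid

theorem sum_prod_interleave_telescope {R : Type*} [CommRing R] (a b : ℕ → R) (m : ℕ) :
    ∑ j ∈ range m, (∏ k ∈ range j, a k * b k) * (1 + a j)
        - a 0 * ∑ j ∈ range m, (∏ k ∈ range j, b k * a (k + 1)) * (1 + b j)
      = 1 - ∏ k ∈ range m, a k * b k := by
  have hterm : ∀ j, (∏ k ∈ range j, a k * b k) * (1 + a j)
      - a 0 * ((∏ k ∈ range j, b k * a (k + 1)) * (1 + b j))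
      = ∏ k ∈ range j, a k * b k - ∏ k ∈ range (j + 1), a k * b k := fun j => by
    rw [← mul_assoc, mul_prod_range_interleave, prod_range_succ]
    ring
  rw [mul_sum, ← sum_sub_distrib]
  simp only [hterm, sum_range_sub', prod_range_zero]

theorem Sev_sub_mul_Sod (n : ℕ) {K : Type*} [Field K] (α φ : ZMod (2 * n + 2) → K)
    (x : ZMod (2 * n + 2)) :
    Sev n α φ x - (α x / φ x) * Sod n α φ (x + 1)
      = 1 - ∏ k ∈ range (n + 1), (α (x + 2 * k) / φ (x + 2 * k)) * φ (x + 2 * k + 1) := by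
  have h := sum_prod_interleave_telescope (fun k : ℕ => α (x + 2 * k) / φ (x + 2 * k))
    (fun k : ℕ => φ (x + 2 * k + 1)) (n + 1)
  have hodd : ∀ k : ℕ, x + 1 + 2 * k = x + 2 * k + 1 := fun k => by ring
  have heven : ∀ k : ℕ, x + 2 * k + 1 + 1 = x + 2 * ((k + 1 : ℕ) : ZMod (2 * n + 2)) :=
    fun k => by push_cast; ring
  simp only [Nat.cast_zero, mul_zero, add_zero] at h
  rw [← h, Sev, Sod]
  simp only [hodd, heven]

theorem stmt2_general (n : ℕ) (K : Type*) [Field K]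
    (α φ : ZMod (2*n+2) → K) (hα : ∀ i, α i ≠ 0) (hφ : ∀ i, φ i ≠ 0)
    (q β₀ : K)
    (hq : q = ∏ i ∈ range (2*n+2), α (i : ZMod (2*n+2)))
    (hβ₀ : β₀ = ∏ i ∈ range (n+1), φ (2*i) * α (2*i+1) / φ (2*i+1)) :
    ∀ i : ℕ, i ≤ n →
      Sev n α φ (2*i) - (α (2*i) / φ (2*i)) * Sod n α φ (2*i+1) = 1 - q / β₀ := by
  intro i _
  have hβ₀_ne : β₀ ≠ 0 := hβ₀ ▸ prod_ne_zero_iff.2 fun k _ =>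
    div_ne_zero (mul_ne_zero (hφ _) (hα _)) (hφ _)
  have hq_pairs := prod_range_two_mul (fun i : ℕ => α (i : ZMod (2*n+2))) (n + 1)
  rw [mul_add_one] at hq_pairs
  have hq_div : q / β₀ = ∏ k ∈ range (n + 1), α (2 * k) / φ (2 * k) * φ (2 * k + 1) := by
    rw [div_eq_iff hβ₀_ne, hβ₀, ← prod_mul_distrib, hq, hq_pairs]
    refine prod_congr rfl fun k _ => ?_
    have := hφ (2 * k)
    have := hφ (2 * k + 1)
    push_cast
    field_simp
  rw [Sev_sub_mul_Sod, hq_div]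
  congr 1
  exact ZMod.prod_range_add_two_mul n (fun y => α y / φ y * φ (y + 1)) i

/-- `S_{2i} - (α_{2i}/φ_{2i}) S_{2i+1} = 1 - q/β₀` for `i = 0, …, n`,
where `q = ∏_{i=0}^{2n+1} α_i` and `β₀ = ∏_{i=0}^{n} φ_{2i} α_{2i+1}/φ_{2i+1}`. -/
theorem stmt2 (n : ℕ) (hn : 1 ≤ n) (K : Type*) [Field K]
    (α φ : ZMod (2*n+2) → K) (hα : ∀ i, α i ≠ 0) (hφ : ∀ i, φ i ≠ 0)
    (q β₀ : K)
    (hq : q = ∏ i ∈ range (2*n+2), α (i : ZMod (2*n+2)))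
    (hβ₀ : β₀ = ∏ i ∈ range (n+1), φ (2*i) * α (2*i+1) / φ (2*i+1)) :
    ∀ i : ℕ, i ≤ n →
      Sev n α φ (2*i) - (α (2*i) / φ (2*i)) * Sod n α φ (2*i+1) = 1 - q / β₀ :=
  stmt2_general n K α φ hα hφ q β₀ hq hβ₀
end

section
/- For all i, j ∈ ℤ/(2n+2)ℤ with j = i + 1 (so that a_{i,j} = −1), the maps r_i and r_j satisfy the braid relation r_i ∘ r_j ∘ r_i = r_j ∘ r_i ∘ r_j on tuples (α, φ) (with all nonvanishing conditions holding for every intermediate tuple). -/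
/-- The Cartan matrix of type `A_{2n+1}^{(1)}`, with rows and columns indexed by
`ZMod (2n+2)`. -/
def cartan (n : ℕ) (i j : ZMod (2*n+2)) : ℤ :=
  if i = j then 2 else if i = j + 1 ∨ j = i + 1 then -1 else 0

/-- The `α`-component of the simple reflection `r_j`:
`r_j(α)_i = α_i α_j^{-a_{j,i}}`. -/
noncomputable def rα (n : ℕ) {K : Type*} [Field K] (j : ZMod (2*n+2))
    (α : ZMod (2*n+2) → K) : ZMod (2*n+2) → K :=
  fun i => α i * α j ^ (-(cartan n j i))

/-- The `φ`-component of the simple reflection `r_j`: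
`r_j(φ)_i = φ_i α_j^{-δ_{i,j}+δ_{i,j+1}} ((α_j+φ_j)/(1+φ_j))^{δ_{i,j-1}-δ_{i,j+1}}`. -/
noncomputable def rφ (n : ℕ) {K : Type*} [Field K] (j : ZMod (2*n+2))
    (α φ : ZMod (2*n+2) → K) : ZMod (2*n+2) → K :=
  fun i => φ i * α j ^ (((if i = j + 1 then 1 else 0) : ℤ) - ((if i = j then 1 else 0) : ℤ))
    * ((α j + φ j) / (1 + φ j))
        ^ (((if i = j - 1 then 1 else 0) : ℤ) - ((if i = j + 1 then 1 else 0) : ℤ))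

/-- The nonvanishing conditions on a tuple `(α, φ)`:
`α_i ≠ 0`, `φ_i ≠ 0`, `1 + φ_i ≠ 0` and `α_i + φ_i ≠ 0` for all `i`. -/
def Good (n : ℕ) {K : Type*} [Field K] (α φ : ZMod (2*n+2) → K) : Prop :=
  ∀ i, α i ≠ 0 ∧ φ i ≠ 0 ∧ 1 + φ i ≠ 0 ∧ α i + φ i ≠ 0

/-!
Write `c(a, p) = (a + p) / (1 + p)` (`twist`) for the factor attached to `r_j` in the definition
of `rφ`.

The `α`-part only uses `a_{i,i} = 2` and `a_{i,j} = a_{j,i} = -1`: for any Cartan-type matrix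
both `r_i r_j r_i` and `r_j r_i r_j` send `α_k` to `α_k (α_i α_j)^{-(a_{i,k} + a_{j,k})}`.

For the `φ`-part only the coordinates `i - 1, …, i + 2` move, and with `a = α_i`, `b = α_{i+1}`,
`p = φ_i`, `q = φ_{i+1}` the two sides agree there as soon as the twists `c₁, c₂, c₃` met by
`r_i r_{i+1} r_i` and `d₁, d₂, d₃` met by `r_{i+1} r_i r_{i+1}` satisfy `c₁ c₃ = d₂` and
`c₂ = d₁ d₃`. With `M₁ = b (a + p) + q (1 + p)`, `N₁ = a + p + q a (1 + p)`,
`M₂ = a b (1 + q) + p (b + q)` and `N₂ = 1 + q + p (b + q)` one has `c₂ = a M₁ / N₁` and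
`d₂ = M₂ / N₂`, and both identities come down to the factorisations
`b N₁ + p M₁ = (1 + p) M₂`, `N₁ + p M₁ = (a + p) N₂`, `M₂ + q N₂ = (1 + q) M₁` and
`M₂ + q a N₂ = (b + q) N₁`. The hypothesis `1 ≤ n` is what makes `i - 1, …, i + 2` distinct in
`ZMod (2n+2)`.
-/

section SimpleReflection

variable {ι G : Type*} [CommGroupWithZero G]

def simpleReflection (A : ι → ι → ℤ) (j : ι) (α : ι → G) : ι → G :=
  fun k => α k * α j ^ (-A j k)

variable {A : ι → ι → ℤ} {α : ι → G}

theorem simpleReflection_apply_self {j : ι} (hj : A j j = 2) :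
    simpleReflection A j α j = (α j)⁻¹ := by
  rw [simpleReflection, hj, zpow_neg, zpow_two, mul_inv, ← mul_assoc]
  simpa using inv_mul_mul_self (α j)⁻¹

theorem simpleReflection_apply_of_eq_neg_one {j k : ι} (hjk : A j k = -1) :
    simpleReflection A j α k = α k * α j := by
  rw [simpleReflection, hjk, neg_neg, zpow_one]

theorem simpleReflection_braid_apply {i j : ι} (hi : A i i = 2) (hij : A i j = -1)
    (hji : A j i = -1) (hαi : α i ≠ 0) (hαj : α j ≠ 0) (k : ι) :
    simpleReflection A i (simpleReflection A j (simpleReflection A i α)) k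
      = α k * (α i * α j) ^ (-(A i k + A j k)) := by
  have hi' : simpleReflection A j (simpleReflection A i α) i = α j := by
    rw [simpleReflection_apply_of_eq_neg_one hji, simpleReflection_apply_self hi,
      simpleReflection_apply_of_eq_neg_one hij, mul_comm (α j), inv_mul_cancel_left₀ hαi]
  rw [simpleReflection, hi', simpleReflection, simpleReflection_apply_of_eq_neg_one hij,
    simpleReflection, neg_add, zpow_add₀ (mul_ne_zero hαi hαj), mul_zpow, mul_zpow, mul_zpow]
  simp only [mul_assoc, mul_left_comm, mul_comm]

theorem simpleReflection_braid {i j : ι} (hi : A i i = 2) (hj : A j j = 2)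
    (hij : A i j = -1) (hji : A j i = -1) (hαi : α i ≠ 0) (hαj : α j ≠ 0) :
    simpleReflection A i (simpleReflection A j (simpleReflection A i α))
      = simpleReflection A j (simpleReflection A i (simpleReflection A j α)) := by
  funext k
  rw [simpleReflection_braid_apply hi hij hji hαi hαj,
    simpleReflection_braid_apply hj hji hij hαj hαi, mul_comm (α j), add_comm]

end SimpleReflection

section Twist

variable {K : Type*} [Field K]

def twist (a p : K) : K := (a + p) / (1 + p)

theorem twist_div (a u : K) {v : K} (hv : v ≠ 0) :
    twist a (u / v) = (a * v + u) / (v + u) := by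
  rw [twist, add_div' _ _ _ hv, one_add_div hv, div_div_div_cancel_right₀ hv]

variable {a b p q : K}

theorem div_twist (u : K) : u / twist a p = u * (1 + p) / (a + p) := by
  rw [twist, div_div_eq_mul_div]

theorem twist_mul_div_twist (hap : a + p ≠ 0) :
    twist (a * b) (q * a / twist a p)
      = a * (b * (a + p) + q * (1 + p)) / (a + p + q * a * (1 + p)) := by
  rw [div_twist, twist_div _ _ hap]
  congr 1
  ring

theorem twist_mul_mul_twist (hq : 1 + q ≠ 0) :
    twist (a * b) (p * twist b q)
      = (a * b * (1 + q) + p * (b + q)) / (1 + q + p * (b + q)) := by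
  rw [twist.eq_1 b, mul_div_assoc', twist_div _ _ hq]

theorem twist_mul_twist_eq_twist (ha : a ≠ 0) (hp : 1 + p ≠ 0) (hap : a + p ≠ 0)
    (hq : 1 + q ≠ 0) (hN : 1 + q * a / twist a p ≠ 0) :
    twist a p * twist b (p / a * twist (a * b) (q * a / twist a p))
      = twist (a * b) (p * twist b q) := by
  rw [div_twist, one_add_div hap] at hN
  have hN₁ := (div_ne_zero_iff.mp hN).1
  have hc₃ : twist b (p / a * twist (a * b) (q * a / twist a p))
      = (1 + p) * (a * b * (1 + q) + p * (b + q)) / ((a + p) * (1 + q + p * (b + q))) := by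
    rw [twist_mul_div_twist hap, ← mul_div_assoc, ← mul_assoc, div_mul_cancel₀ p ha,
      twist_div _ _ hN₁]
    congr 1 <;> ring
  rw [hc₃, twist_mul_mul_twist hq, twist]
  field_simp

theorem twist_eq_twist_mul_twist (ha : a ≠ 0) (hb : b ≠ 0) (hap : a + p ≠ 0) (hq : 1 + q ≠ 0)
    (hbq : b + q ≠ 0) (hM : a * b + p * twist b q ≠ 0) :
    twist (a * b) (q * a / twist a p)
      = twist b q * twist a (q / b * (a * b) / twist (a * b) (p * twist b q)) := by
  rw [twist.eq_1 b, mul_div_assoc', add_div' _ _ _ hq] at hM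
  have hM₂ := (div_ne_zero_iff.mp hM).1
  have hd₃ : twist a (q / b * (a * b) / twist (a * b) (p * twist b q))
      = a * (1 + q) * (b * (a + p) + q * (1 + p)) / ((b + q) * (a + p + q * a * (1 + p))) := by
    rw [twist_mul_mul_twist hq, div_div_eq_mul_div, div_mul_comm, mul_div_cancel_right₀ a hb,
      twist_div _ _ hM₂]
    congr 1 <;> ring
  rw [hd₃, twist_mul_div_twist hap, twist]
  field_simp

end Twist

theorem ZMod.natCast_ne_zero_of_pos_of_lt {m N : ℕ} (h0 : 0 < m) (hm : m < N) :
    (m : ZMod N) ≠ 0 := by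
  rw [Ne, ZMod.natCast_eq_zero_iff]
  exact Nat.not_dvd_of_pos_of_lt h0 hm

section Reflections

instance ZMod.fact_one_lt_two_mul_add_two (n : ℕ) : Fact (1 < 2*n+2) := ⟨by omega⟩

variable {n : ℕ} {K : Type*} [Field K] {α φ : ZMod (2*n+2) → K}

theorem ZMod.two_ne_zero_two_mul_add_two (hn : 1 ≤ n) : (2 : ZMod (2*n+2)) ≠ 0 := by
  exact_mod_cast ZMod.natCast_ne_zero_of_pos_of_lt (m := 2) (N := 2*n+2) two_pos (by omega)

theorem ZMod.three_ne_zero_two_mul_add_two (hn : 1 ≤ n) : (3 : ZMod (2*n+2)) ≠ 0 := by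
  exact_mod_cast ZMod.natCast_ne_zero_of_pos_of_lt (m := 3) (N := 2*n+2) three_pos (by omega)

theorem cartan_self (j : ZMod (2*n+2)) : cartan n j j = 2 := if_pos rfl

theorem cartan_add_one_right (j : ZMod (2*n+2)) : cartan n j (j + 1) = -1 := by
  simp [cartan]

theorem cartan_add_one_left (j : ZMod (2*n+2)) : cartan n (j + 1) j = -1 := by
  simp [cartan]

theorem rα_eq_simpleReflection (j : ZMod (2*n+2)) :
    rα n j α = simpleReflection (cartan n) j α := rfl

theorem rα_self (j : ZMod (2*n+2)) : rα n j α j = (α j)⁻¹ :=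
  simpleReflection_apply_self (cartan_self j)

theorem rα_add_one (j : ZMod (2*n+2)) : rα n j α (j + 1) = α j * α (j + 1) := by
  rw [rα_eq_simpleReflection, simpleReflection_apply_of_eq_neg_one (cartan_add_one_right j),
    mul_comm]

theorem rα_add_one_left (j : ZMod (2*n+2)) : rα n (j + 1) α j = α j * α (j + 1) :=
  simpleReflection_apply_of_eq_neg_one (cartan_add_one_left j)

theorem rφ_self (j : ZMod (2*n+2)) : rφ n j α φ j = φ j / α j := by
  have : j ≠ j - 1 := fun h => one_ne_zero (by linear_combination h)
  simp [rφ, this, div_eq_mul_inv]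

theorem rφ_add_one (hn : 1 ≤ n) (j : ZMod (2*n+2)) :
    rφ n j α φ (j + 1) = φ (j + 1) * α j / twist (α j) (φ j) := by
  have : j + 1 ≠ j - 1 := fun h => ZMod.two_ne_zero_two_mul_add_two hn (by linear_combination h)
  simp [rφ, twist, this, div_eq_mul_inv]

theorem rφ_add_one_left (hn : 1 ≤ n) (j : ZMod (2*n+2)) :
    rφ n (j + 1) α φ j = φ j * twist (α (j + 1)) (φ (j + 1)) := by
  have : j ≠ j + 1 + 1 := fun h => ZMod.two_ne_zero_two_mul_add_two hn (by linear_combination -h)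
  simp [rφ, twist, this]

theorem rφ_of_ne {j k : ZMod (2*n+2)} (h₁ : k + 1 ≠ j) (h₂ : k ≠ j) (h₃ : k ≠ j + 1) :
    rφ n j α φ k = φ k := by
  have : k ≠ j - 1 := fun h => h₁ (by rw [h, sub_add_cancel])
  simp [rφ, this, h₂, h₃]

theorem rφ_add_one_add_one (hn : 1 ≤ n) (j : ZMod (2*n+2)) :
    rφ n j α φ (j + 1 + 1) = φ (j + 1 + 1) :=
  rφ_of_ne (fun h => ZMod.three_ne_zero_two_mul_add_two hn (by linear_combination h))
    (fun h => ZMod.two_ne_zero_two_mul_add_two hn (by linear_combination h))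
    (fun h => one_ne_zero (by linear_combination h))

theorem rφ_add_one_add_one_left (hn : 1 ≤ n) (j : ZMod (2*n+2)) :
    rφ n (j + 1 + 1) α φ j = φ j :=
  rφ_of_ne (fun h => one_ne_zero (by linear_combination -h))
    (fun h => ZMod.two_ne_zero_two_mul_add_two hn (by linear_combination -h))
    (fun h => ZMod.three_ne_zero_two_mul_add_two hn (by linear_combination -h))

end Reflections

section Braid

variable {n : ℕ} {K : Type*} [Field K] {α φ : ZMod (2*n+2) → K}

theorem rα_braid (i : ZMod (2*n+2)) (ha : α i ≠ 0) (hb : α (i + 1) ≠ 0) :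
    rα n i (rα n (i+1) (rα n i α)) = rα n (i+1) (rα n i (rα n (i+1) α)) :=
  simpleReflection_braid (cartan_self i) (cartan_self (i + 1)) (cartan_add_one_right i)
    (cartan_add_one_left i) ha hb

theorem rφ_braid (hn : 1 ≤ n) (i : ZMod (2*n+2)) (h : Good n α φ)
    (hi : Good n (rα n i α) (rφ n i α φ)) (hi' : Good n (rα n (i+1) α) (rφ n (i+1) α φ)) :
    rφ n i (rα n (i+1) (rα n i α)) (rφ n (i+1) (rα n i α) (rφ n i α φ))
      = rφ n (i+1) (rα n i (rα n (i+1) α)) (rφ n i (rα n (i+1) α) (rφ n (i+1) α φ)) := by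
  obtain ⟨ha, -, hp, hap⟩ := h i
  obtain ⟨hb, -, hq, hbq⟩ := h (i + 1)
  have hN := (hi (i + 1)).2.2.1
  have hM := (hi' i).2.2.2
  rw [rφ_add_one hn] at hN
  rw [rα_add_one_left, rφ_add_one_left hn] at hM
  have key₁ := twist_mul_twist_eq_twist (b := α (i + 1)) ha hp hap hq hN
  have key₂ := twist_eq_twist_mul_twist ha hb hap hq hbq hM
  funext k
  rcases eq_or_ne (k + 1) i with rfl | hk₁
  · simp only [rα_self, rα_add_one, rα_add_one_left, rφ_self, rφ_add_one hn, rφ_add_one_left hn,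
      rφ_add_one_add_one_left hn, inv_mul_cancel_left₀ ha]
    rw [mul_assoc, key₁]
  rcases eq_or_ne k i with rfl | hk₂
  · simp only [rα_self, rα_add_one, rα_add_one_left, rφ_self, rφ_add_one hn, rφ_add_one_left hn,
      inv_mul_cancel_left₀ ha, mul_inv_cancel_right₀ hb]
    rw [key₂]
    field_simp
  rcases eq_or_ne k (i + 1) with rfl | hk₃
  · simp only [rα_self, rα_add_one, rα_add_one_left, rφ_self, rφ_add_one hn, rφ_add_one_left hn,
      inv_mul_cancel_left₀ ha, mul_inv_cancel_right₀ hb]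
    rw [← key₁]
    field_simp
  rcases eq_or_ne k (i + 1 + 1) with rfl | hk₄
  · simp only [rα_self, rα_add_one, rα_add_one_left, rφ_self, rφ_add_one hn, rφ_add_one_left hn,
      rφ_add_one_add_one hn, mul_inv_cancel_right₀ hb]
    rw [key₂]
    field_simp
  simp only [rφ_of_ne hk₁ hk₂ hk₃, rφ_of_ne ((add_left_injective 1).ne hk₂) hk₃ hk₄]

end Braid

/-- the braid relation `r_i r_{i+1} r_i = r_{i+1} r_i r_{i+1}`
(the case `a_{i,j} = -1`, `j = i + 1`) on tuples `(α, φ)`. -/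
theorem stmt9 (n : ℕ) (hn : 1 ≤ n) (K : Type*) [Field K]
    (α φ : ZMod (2*n+2) → K) (h : Good n α φ) :
    ∀ i : ZMod (2*n+2),
      Good n (rα n i α) (rφ n i α φ) →
      Good n (rα n (i+1) (rα n i α)) (rφ n (i+1) (rα n i α) (rφ n i α φ)) →
      Good n (rα n (i+1) α) (rφ n (i+1) α φ) →
      Good n (rα n i (rα n (i+1) α)) (rφ n i (rα n (i+1) α) (rφ n (i+1) α φ)) →
      rα n i (rα n (i+1) (rα n i α)) = rα n (i+1) (rα n i (rα n (i+1) α))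
      ∧ rφ n i (rα n (i+1) (rα n i α)) (rφ n (i+1) (rα n i α) (rφ n i α φ))
          = rφ n (i+1) (rα n i (rα n (i+1) α)) (rφ n i (rα n (i+1) α) (rφ n (i+1) α φ)) := by
  intro i hi _ hi' _
  exact ⟨rα_braid i (h i).1 (h (i + 1)).1, rφ_braid hn i h hi hi'⟩
end
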